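/- The fixed points of the flow dA/dt = A⁻¹C + CA⁻¹ − 2A on symmetric positive definite matrices are exactly A = C^{1/2}; i.e., A⁻¹C + CA⁻¹ = 2A with A, C symmetric positive definite implies A² = C. -/

import Mathlib

open Matrix

section OldSqrt

open scoped ComplexOrder

/-- The positive semidefinite square root of a positive semidefinite matrix, as defined in
Mathlib (Dec 2024) under the name `Matrix.PosSemidef.sqrt` (since removed). -/
noncomputable def Matrix.PosSemidef.sqrt {n 𝕜 : Type*} [Fintype n] [DecidableEq n] [RCLike 𝕜]
    {A : Matrix n n 𝕜} (hA : A.PosSemidef) : Matrix n n 𝕜 :=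
  hA.1.eigenvectorUnitary.1 * diagonal ((↑) ∘ (fun x : ℝ => √x) ∘ hA.1.eigenvalues) *
    (star hA.1.eigenvectorUnitary : Matrix n n 𝕜)

end OldSqrt

/-!
Multiplying `A⁻¹C + CA⁻¹ = 2A` by `A` on both sides gives `AD + DA = 0` for the Hermitian
matrix `D = C - A²`. By cyclicity of the trace, `tr (DAD) = tr (AD²) = -tr (DAD)`, so the
positive semidefinite matrix `DAD = DᴴAD` has trace zero and vanishes; as `A` is positive
definite this forces `D = 0`. Then `A` is a positive semidefinite square root of `C`, hence
equal to `C^{1/2}` by uniqueness of such roots.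
-/

open scoped MatrixOrder ComplexOrder

namespace Matrix

variable {n m 𝕜 : Type*} [Fintype n] [RCLike 𝕜]

lemma PosSemidef.sqrt_eq_cfcSqrt [DecidableEq n] {A : Matrix n n 𝕜} (hA : A.PosSemidef) :
    hA.sqrt = CFC.sqrt A := by
  rw [CFC.sqrt_eq_real_sqrt A hA.nonneg, cfcₙ_eq_cfc, hA.1.cfc_eq, IsHermitian.cfc,
    Unitary.conjStarAlgAut_apply]
  rfl

lemma PosSemidef.eq_sqrt_of_mul_self_eq [DecidableEq n] {A B : Matrix n n 𝕜} (hA : A.PosSemidef)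
    (hB : B.PosSemidef) (h : B * B = A) : B = hA.sqrt := by
  rw [hA.sqrt_eq_cfcSqrt, CFC.sqrt_unique h hB.nonneg]

lemma PosDef.eq_zero_of_conjTranspose_mul_mul_eq_zero [Fintype m] [DecidableEq m]
    {A : Matrix n n 𝕜} {B : Matrix n m 𝕜} (hA : A.PosDef) (h : Bᴴ * A * B = 0) : B = 0 := by
  refine ext_of_mulVec_single fun i => ?_
  rw [zero_mulVec]
  by_contra hB
  have hpos := hA.dotProduct_mulVec_pos hB
  rw [star_mulVec, ← dotProduct_mulVec, mulVec_mulVec, mulVec_mulVec, h, zero_mulVec,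
    dotProduct_zero] at hpos
  exact hpos.false

lemma PosDef.eq_zero_of_mul_add_mul_eq_zero {A X : Matrix n n 𝕜} (hA : A.PosDef)
    (hX : X.IsHermitian) (h : A * X + X * A = 0) : X = 0 := by
  classical
  have htrace : (X * A * X).trace = 0 := by
    have hcycle : (X * A * X).trace = (A * X * X).trace := by
      rw [Matrix.mul_assoc, trace_mul_comm]
    rw [eq_neg_of_add_eq_zero_left h, Matrix.neg_mul, trace_neg] at hcycle
    exact CharZero.eq_neg_self_iff.mp hcycle
  have hpsd : (X * A * X).PosSemidef := by
    simpa only [hX.eq] using hA.posSemidef.conjTranspose_mul_mul_same X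
  refine hA.eq_zero_of_conjTranspose_mul_mul_eq_zero ?_
  rw [hX.eq]
  exact hpsd.trace_eq_zero_iff.mp htrace

lemma mul_add_mul_eq_zero_of_inv_mul_add_mul_inv_eq {K : Type*} [DecidableEq n] [Field K]
    {A C : Matrix n n K} (hA : IsUnit A.det) (h : A⁻¹ * C + C * A⁻¹ = (2 : K) • A) :
    A * (C - A * A) + (C - A * A) * A = 0 := by
  have hconj : A * (A⁻¹ * C + C * A⁻¹) * A = C * A + A * C := by
    rw [Matrix.mul_add, Matrix.add_mul, mul_nonsing_inv_cancel_left _ _ hA, ← Matrix.mul_assoc,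
      nonsing_inv_mul_cancel_right _ _ hA]
  rw [h, Matrix.mul_smul, Matrix.smul_mul] at hconj
  rw [Matrix.mul_sub, Matrix.sub_mul, ← Matrix.mul_assoc, sub_add_sub_comm, add_comm (A * C),
    ← hconj, two_smul, sub_self]

end Matrix

/-- The fixed points of dA/dt = A⁻¹C + CA⁻¹ − 2A on symmetric positive definite matrices
are exactly A = C^{1/2}: if A⁻¹C + CA⁻¹ = 2A with A, C positive definite, then A² = C,
i.e. A is the unique positive definite square root of C. -/
theorem stmt_18 {n : ℕ} (C A : Matrix (Fin n) (Fin n) ℝ)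
    (hC : C.PosDef) (hA : A.PosDef)
    (hfix : A⁻¹ * C + C * A⁻¹ = (2 : ℝ) • A) :
    A * A = C ∧ A = hC.posSemidef.sqrt := by
  have hD : C - A * A = 0 := by
    refine hA.eq_zero_of_mul_add_mul_eq_zero (hC.1.sub (sq A ▸ hA.1.pow 2)) ?_
    exact mul_add_mul_eq_zero_of_inv_mul_add_mul_inv_eq (A.isUnit_iff_isUnit_det.mp hA.isUnit) hfix
  have hAA : A * A = C := (sub_eq_zero.mp hD).symm
  exact ⟨hAA, hC.posSemidef.eq_sqrt_of_mul_self_eq hA.posSemidef hAA⟩
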